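/- arXiv:2102.03157 — 7 statements merged into one kernel-verified Lean document; each statement's English description precedes it below -/
import Mathlib

section
/- Two centered, integrable probability measures μ, ν on ℤ are equal if and only if their potential functions U_μ and U_ν agree at every integer. -/
open scoped BigOperators

/-- A probability mass function on the integers with finite first moment and mean zero. -/
def IsCenteredPMF (μ : ℤ → ℝ) : Prop :=
  (∀ y, 0 ≤ μ y) ∧ HasSum μ 1 ∧ Summable (fun y : ℤ => |(y : ℝ)| * μ y) ∧
    (∑' y : ℤ, (y : ℝ) * μ y) = 0

/-- The potential of a measure on ℤ: `U_μ(x) = ∑_y |x - y| μ({y})`. -/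
noncomputable def potential (μ : ℤ → ℝ) (x : ℤ) : ℝ :=
  ∑' y : ℤ, |(x : ℝ) - (y : ℝ)| * μ y

/-!
The discrete second difference of `y ↦ |y|` on `ℤ` is `2` at `0` and vanishes elsewhere. Since the
potential is the convolution of `μ` with `|·|`, its second difference is `2 μ`, so `U_μ` determines `μ`.
-/

lemma Int.abs_second_difference (x y : ℤ) :
    |x + 1 - y| + |x - 1 - y| - 2 * |x - y| = if y = x then 2 else 0 := by
  split_ifs with h
  · simp [h]
  · rcases lt_or_gt_of_ne h with h | h
    · rw [abs_of_pos (by omega), abs_of_nonneg (by omega), abs_of_pos (by omega)]; ring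
    · rw [abs_of_nonpos (by omega), abs_of_neg (by omega), abs_of_neg (by omega)]; ring

lemma summable_abs_sub_mul {μ : ℤ → ℝ} (hμ : Summable μ)
    (hμ₁ : Summable fun y : ℤ => |(y : ℝ)| * μ y) (x : ℝ) :
    Summable fun y : ℤ => |x - y| * μ y := by
  refine Summable.of_norm_bounded ((hμ.abs.mul_left |x|).add hμ₁.abs) fun y => ?_
  rw [Real.norm_eq_abs, abs_mul, abs_abs, abs_mul, abs_abs, ← add_mul]
  exact mul_le_mul_of_nonneg_right (abs_sub _ _) (abs_nonneg _)

lemma potential_second_difference {μ : ℤ → ℝ} (hμ : Summable μ)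
    (hμ₁ : Summable fun y : ℤ => |(y : ℝ)| * μ y) (x : ℤ) :
    potential μ (x + 1) + potential μ (x - 1) - 2 * potential μ x = 2 * μ x := by
  have hsum := ((summable_abs_sub_mul hμ hμ₁ (x + 1 : ℤ)).hasSum.add
    (summable_abs_sub_mul hμ hμ₁ (x - 1 : ℤ)).hasSum).sub
    ((summable_abs_sub_mul hμ hμ₁ x).hasSum.mul_left 2)
  refine hsum.unique ((hasSum_ite_eq x (2 * μ x)).congr_fun fun y => ?_)
  have key : |((x + 1 : ℤ) : ℝ) - y| + |((x - 1 : ℤ) : ℝ) - y| - 2 * |(x : ℝ) - y|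
      = if y = x then 2 else 0 := by
    exact_mod_cast Int.abs_second_difference x y
  calc _ = (|((x + 1 : ℤ) : ℝ) - y| + |((x - 1 : ℤ) : ℝ) - y| - 2 * |(x : ℝ) - y|) * μ y := by
        ring
    _ = _ := by rw [key]; split_ifs with h <;> simp [h]

theorem stmt3 (μ ν : ℤ → ℝ) (hμ : IsCenteredPMF μ) (hν : IsCenteredPMF ν) :
    μ = ν ↔ ∀ x : ℤ, potential μ x = potential ν x := by
  refine ⟨fun h x => h ▸ rfl, fun hpot => funext fun x => ?_⟩
  have hμx := potential_second_difference hμ.2.1.summable hμ.2.2.1 x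
  have hνx := potential_second_difference hν.2.1.summable hν.2.2.1 x
  rw [hpot, hpot, hpot] at hμx
  linarith
end

section
/- Let S be a standard symmetric random walk and τ a stopping time such that the family {S_{τ∧t} : t ∈ ℕ} is uniformly integrable. Then for every t ∈ ℕ and every x ∈ ℝ, U_{S_τ}(x) ≥ U_{S_{τ∧t}}(x) ≥ |x|, where U_Z(x) := E|x − Z|; moreover U_{S_{τ∧t}}(x) = |x| for all x ∉ (−t, t). -/
/-! The stopped walk `M t = S (τ ∧ t)` is a martingale, so `|x - M t| = max (x - M t) (M t - x)` is
a submartingale and `t ↦ U_{M t}(x)` is nondecreasing, starting from `U_{M 0}(x) = |x|`. Uniform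
integrability upgrades the pointwise convergence `M t → S τ` to convergence in `L¹` (Vitali), so
`U_{M t}(x) → U_{S τ}(x)` bounds the sequence from above. Finally `|M t| ≤ t`, so for `x ∉ (-t, t)`
the sign of `x - M t` is constant and `U_{M t}(x) = |x - E (M t)| = |x|`. -/

open MeasureTheory ProbabilityTheory Filter Topology

namespace MeasureTheory

variable {Ω ι : Type*} {m0 : MeasurableSpace Ω} {μ : Measure Ω}

theorem stoppedProcess_natCast {β : Type*} (u : ℕ → Ω → β) (τ : Ω → ℕ) :
    stoppedProcess u (fun ω => (τ ω : WithTop ℕ)) = fun n ω => u (min (τ ω) n) ω := by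
  funext n ω
  rcases le_total n (τ ω) with h | h <;> simp [stoppedProcess, h] <;> rfl

theorem Martingale.submartingale_abs_sub [Preorder ι] [IsFiniteMeasure μ] {ℱ : Filtration ι m0}
    {f : ι → Ω → ℝ} (hf : Martingale f ℱ μ) (x : ℝ) :
    Submartingale (fun i ω => |x - f i ω|) ℱ μ := by
  have hg := (martingale_const ℱ μ x).sub hf
  have habs : (fun i ω => |x - f i ω|) = ((fun _ _ => x) - f) ⊔ -((fun _ _ => x) - f) := by
    funext i ω
    exact abs_eq_max_neg
  rw [habs]
  exact hg.submartingale.sup hg.neg.submartingale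

theorem Martingale.stoppedProcess {𝒢 : Filtration ℕ m0} [SigmaFiniteFiltration μ 𝒢]
    {f : ℕ → Ω → ℝ} (hf : Martingale f 𝒢 μ) {τ : Ω → ℕ∞} (hτ : IsStoppingTime 𝒢 τ) :
    Martingale (stoppedProcess f τ) 𝒢 μ := by
  refine martingale_iff.2 ⟨?_, hf.submartingale.stoppedProcess hτ⟩
  convert (hf.neg.submartingale.stoppedProcess hτ).neg using 1
  ext i ω
  simp [MeasureTheory.stoppedProcess]

theorem Submartingale.integral_mono [Preorder ι] {ℱ : Filtration ι m0} [SigmaFiniteFiltration μ ℱ]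
    {f : ι → Ω → ℝ} (hf : Submartingale f ℱ μ) :
    Monotone fun i => ∫ ω, f i ω ∂μ := fun _ _ hij => by
  simpa using hf.setIntegral_le hij MeasurableSet.univ

theorem Martingale.integral_eq [Preorder ι] {ℱ : Filtration ι m0} [SigmaFiniteFiltration μ ℱ]
    {f : ι → Ω → ℝ} (hf : Martingale f ℱ μ) {i j : ι} (hij : i ≤ j) :
    ∫ ω, f i ω ∂μ = ∫ ω, f j ω ∂μ := by
  simpa using hf.setIntegral_eq hij MeasurableSet.univ

theorem martingale_sum_range_of_indep [IsFiniteMeasure μ] {𝒢 : Filtration ℕ m0}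
    {X : ℕ → Ω → ℝ} (hX : ∀ i, StronglyMeasurable[𝒢 (i + 1)] (X i))
    (hint : ∀ i, Integrable (X i) μ) (hmean : ∀ i, μ[X i] = 0)
    (hindep : ∀ i, Indep (MeasurableSpace.comap (X i) inferInstance) (𝒢 i) μ) :
    Martingale (fun n ω => ∑ i ∈ Finset.range n, X i ω) 𝒢 μ := by
  refine martingale_of_condExp_sub_eq_zero_nat (fun n => ?_) (fun n => ?_) (fun n => ?_)
  · refine Finset.stronglyMeasurable_fun_sum _ fun i hi => (hX i).mono (𝒢.mono ?_)
    exact Finset.mem_range.1 hi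
  · exact integrable_finsetSum _ fun i _ => hint i
  · have hstep : (fun ω => ∑ i ∈ Finset.range (n + 1), X i ω)
        - (fun ω => ∑ i ∈ Finset.range n, X i ω) = X n := by
      funext ω
      simp [Finset.sum_range_succ]
    rw [hstep]
    have hXn : StronglyMeasurable[MeasurableSpace.comap (X n) inferInstance] (X n) :=
      (comap_measurable (X n)).stronglyMeasurable
    have hle : MeasurableSpace.comap (X n) inferInstance ≤ m0 :=
      ((hX n).measurable.mono (𝒢.le _) le_rfl).comap_le
    refine (condExp_indep_eq hle (𝒢.le n) hXn (hindep n)).trans ?_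
    rw [hmean n]
    rfl

theorem tendsto_integral_abs_sub_of_uniformIntegrable [IsFiniteMeasure μ] {f : ℕ → Ω → ℝ}
    {g : Ω → ℝ} (hUI : UniformIntegrable f 1 μ)
    (hfg : ∀ᵐ ω ∂μ, Tendsto (fun n => f n ω) atTop (𝓝 (g ω))) (x : ℝ) :
    Tendsto (fun n => ∫ ω, |x - f n ω| ∂μ) atTop (𝓝 (∫ ω, |x - g ω| ∂μ)) := by
  have hfg' := tendstoInMeasure_of_tendsto_ae hUI.1 hfg
  have hg : MemLp g 1 μ := hUI.memLp_of_tendstoInMeasure hfg'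
  have hL1 := tendsto_Lp_finite_of_tendstoInMeasure le_rfl ENNReal.one_ne_top hUI.1 hg hUI.2.1 hfg'
  have habs_sub : Continuous fun y : ℝ => |x - y| := (continuous_const.sub continuous_id).abs
  refine tendsto_integral_of_L1' _ (habs_sub.comp_aestronglyMeasurable hg.1)
    (Eventually.of_forall fun n =>
      ((integrable_const x).sub (memLp_one_iff_integrable.1 (hUI.memLp n))).abs) ?_
  refine tendsto_of_tendsto_of_tendsto_of_le_of_le tendsto_const_nhds hL1 (fun _ => zero_le)
    fun n => eLpNorm_mono fun ω => ?_
  simpa [Real.norm_eq_abs, abs_sub_comm] using abs_abs_sub_abs_le_abs_sub (x - f n ω) (x - g ω)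

theorem integral_abs_sub_eq_abs [IsProbabilityMeasure μ] {Y : Ω → ℝ} (hY : Integrable Y μ)
    (hY0 : ∫ ω, Y ω ∂μ = 0) {x : ℝ} (hx : (∀ᵐ ω ∂μ, Y ω ≤ x) ∨ ∀ᵐ ω ∂μ, x ≤ Y ω) :
    ∫ ω, |x - Y ω| ∂μ = |x| := by
  have hmean : ∫ ω, (x - Y ω) ∂μ = x := by
    rw [integral_sub (integrable_const x) hY, hY0]
    simp
  rcases hx with hle | hge
  · have hpos : ∀ᵐ ω ∂μ, 0 ≤ x - Y ω := hle.mono fun ω h => sub_nonneg.2 h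
    have hx0 : 0 ≤ x := hmean ▸ integral_nonneg_of_ae hpos
    rw [integral_congr_ae (hpos.mono fun ω h => abs_of_nonneg h), hmean, abs_of_nonneg hx0]
  · have hneg : ∀ᵐ ω ∂μ, x - Y ω ≤ 0 := hge.mono fun ω h => sub_nonpos.2 h
    have hx0 : x ≤ 0 := hmean ▸ integral_nonpos_of_ae hneg
    rw [integral_congr_ae (hneg.mono fun ω h => abs_of_nonpos h), integral_neg, hmean,
      abs_of_nonpos hx0]

end MeasureTheory

section SimpleRandomWalk

variable {Ω : Type*} {m0 : MeasurableSpace Ω} {μ : Measure Ω} [IsProbabilityMeasure μ]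
  {Y : Ω → ℤ}

theorem ae_eq_one_or_eq_neg_one (hY : Measurable Y) (h₁ : μ (Y ⁻¹' {1}) = 1 / 2)
    (h₂ : μ (Y ⁻¹' {-1}) = 1 / 2) : ∀ᵐ ω ∂μ, Y ω = 1 ∨ Y ω = -1 := by
  have hdisj : Disjoint (Y ⁻¹' {1}) (Y ⁻¹' {-1}) := Disjoint.preimage _ (by simp)
  have hunion : μ (Y ⁻¹' {1} ∪ Y ⁻¹' {-1}) = 1 := by
    rw [measure_union hdisj (hY (measurableSet_singleton _)), h₁, h₂, ENNReal.add_halves]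
  have := (prob_compl_eq_zero_iff ((hY (measurableSet_singleton _)).union
    (hY (measurableSet_singleton _)))).2 hunion
  rw [ae_iff]
  convert this using 2
  ext ω
  simp

theorem integrable_intCast_of_ae_eq_one_or_eq_neg_one
    (hY : Measurable Y) (h : ∀ᵐ ω ∂μ, Y ω = 1 ∨ Y ω = -1) : Integrable (fun ω => (Y ω : ℝ)) μ :=
  Integrable.of_bound (measurable_from_top.comp hY).aestronglyMeasurable 1 <|
    h.mono fun ω hω => by rcases hω with hω | hω <;> simp [hω]

theorem integral_intCast_eq_zero (hY : Measurable Y) (h₁ : μ (Y ⁻¹' {1}) = 1 / 2)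
    (h₂ : μ (Y ⁻¹' {-1}) = 1 / 2) : ∫ ω, (Y ω : ℝ) ∂μ = 0 := by
  have hsplit : (fun ω => (Y ω : ℝ)) =ᵐ[μ]
      fun ω => (Y ⁻¹' {1}).indicator 1 ω - (Y ⁻¹' {-1}).indicator 1 ω := by
    filter_upwards [ae_eq_one_or_eq_neg_one hY h₁ h₂] with ω hω
    rcases hω with hω | hω <;> simp [hω]
  have hm : ∀ z : ℤ, MeasurableSet (Y ⁻¹' {z}) := fun z => hY (measurableSet_singleton z)
  rw [integral_congr_ae hsplit, integral_sub ((integrable_const 1).indicator (hm 1))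
    ((integrable_const 1).indicator (hm (-1))), integral_indicator_one (hm 1),
    integral_indicator_one (hm (-1)), measureReal_def, measureReal_def, h₁, h₂, sub_self]

theorem abs_sum_range_le_of_eq_one_or_eq_neg_one {X : ℕ → ℤ} (h : ∀ i, X i = 1 ∨ X i = -1)
    (n : ℕ) : |∑ i ∈ Finset.range n, X i| ≤ n := by
  refine (Finset.abs_sum_le_sum_abs _ _).trans_eq ?_
  rw [Finset.sum_congr rfl fun i _ => show |X i| = 1 by rcases h i with hi | hi <;> simp [hi]]
  simp

end SimpleRandomWalk

theorem stmt5_general {Ω : Type*} {m0 : MeasurableSpace Ω} (P : Measure Ω) [IsProbabilityMeasure P]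
    (F : Filtration ℕ m0)
    (X : ℕ → Ω → ℤ)
    (hadapted : ∀ i, Measurable[F (i + 1)] (X i))
    (hindepF : ∀ i, Indep (MeasurableSpace.comap (X i) inferInstance) (F i) P)
    (hdist : ∀ i, P (X i ⁻¹' {1}) = 1/2 ∧ P (X i ⁻¹' {-1}) = 1/2)
    (S : ℕ → Ω → ℤ) (hS : ∀ t ω, S t ω = ∑ i ∈ Finset.range t, X i ω)
    (τ : Ω → ℕ) (hτ : IsStoppingTime F (fun ω => (τ ω : WithTop ℕ)))
    (hUI : UniformIntegrable (fun t ω => ((S (min (τ ω) t) ω : ℤ) : ℝ)) 1 P) :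
    ∀ t : ℕ, ∀ x : ℝ,
      ((∫ ω, |x - (S (min (τ ω) t) ω : ℝ)| ∂P ≤ ∫ ω, |x - (S (τ ω) ω : ℝ)| ∂P) ∧
        |x| ≤ ∫ ω, |x - (S (min (τ ω) t) ω : ℝ)| ∂P) ∧
      ((x ≤ -(t : ℝ) ∨ (t : ℝ) ≤ x) → ∫ ω, |x - (S (min (τ ω) t) ω : ℝ)| ∂P = |x|) := by
  have hXm : ∀ i, Measurable (X i) := fun i => (hadapted i).mono (F.le _) le_rfl
  have hsteps : ∀ᵐ ω ∂P, ∀ i, X i ω = 1 ∨ X i ω = -1 :=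
    ae_all_iff.2 fun i => ae_eq_one_or_eq_neg_one (hXm i) (hdist i).1 (hdist i).2
  have hwalk : Martingale (fun n ω => ∑ i ∈ Finset.range n, (X i ω : ℝ)) F P :=
    martingale_sum_range_of_indep
      (fun i => (measurable_from_top.comp (hadapted i)).stronglyMeasurable)
      (fun i => integrable_intCast_of_ae_eq_one_or_eq_neg_one (hXm i) (hsteps.mono fun _ h => h i))
      (fun i => integral_intCast_eq_zero (hXm i) (hdist i).1 (hdist i).2)
      fun i => indep_of_indep_of_le_left (hindepF i)
        (measurable_from_top.comp (comap_measurable (X i))).comap_le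
  have hstopped : Martingale (fun n ω => (S (min (τ ω) n) ω : ℝ)) F P := by
    simpa [stoppedProcess_natCast, hS] using hwalk.stoppedProcess hτ
  have hbound : ∀ n, ∀ᵐ ω ∂P, |(S (min (τ ω) n) ω : ℝ)| ≤ n := fun n =>
    hsteps.mono fun ω h => by
      have := abs_sum_range_le_of_eq_one_or_eq_neg_one h (min (τ ω) n)
      rw [← hS] at this
      exact_mod_cast this.trans (by exact_mod_cast min_le_right _ _)
  intro t x
  have hmono := (hstopped.submartingale_abs_sub x).integral_mono
  have hlim := tendsto_integral_abs_sub_of_uniformIntegrable hUI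
    (ae_of_all _ fun ω => tendsto_atTop_of_eventually_const fun n (hn : τ ω ≤ n) => by
      rw [min_eq_left hn]) x
  refine ⟨⟨hmono.ge_of_tendsto hlim t, by simpa [hS] using hmono (Nat.zero_le t)⟩, fun hx => ?_⟩
  refine integral_abs_sub_eq_abs (hstopped.integrable t)
    ((hstopped.integral_eq (Nat.zero_le t)).symm.trans (by simp [hS])) ?_
  rcases hx with hx | hx
  · exact .inr <| (hbound t).mono fun ω hω => by linarith [(abs_le.1 hω).1]
  · exact .inl <| (hbound t).mono fun ω hω => by linarith [(abs_le.1 hω).2]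

/-- For a stopping time τ of the simple symmetric random walk S with `{S_{τ∧t}}` uniformly
integrable: `U_{S_τ}(x) ≥ U_{S_{τ∧t}}(x) ≥ |x|`, and `U_{S_{τ∧t}}(x) = |x|` outside `(-t,t)`. -/
theorem stmt5 {Ω : Type*} {m0 : MeasurableSpace Ω} (P : Measure Ω) [IsProbabilityMeasure P]
    (F : Filtration ℕ m0)
    (X : ℕ → Ω → ℤ)
    (hmeas : ∀ i, Measurable (X i))
    (hadapted : ∀ i, Measurable[F (i + 1)] (X i))
    (hindep : iIndepFun X P)
    (hindepF : ∀ i, Indep (MeasurableSpace.comap (X i) inferInstance) (F i) P)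
    (hdist : ∀ i, P (X i ⁻¹' {1}) = 1/2 ∧ P (X i ⁻¹' {-1}) = 1/2)
    (S : ℕ → Ω → ℤ) (hS : ∀ t ω, S t ω = ∑ i ∈ Finset.range t, X i ω)
    (τ : Ω → ℕ) (hτ : IsStoppingTime F (fun ω => (τ ω : WithTop ℕ)))
    (hUI : UniformIntegrable (fun t ω => ((S (min (τ ω) t) ω : ℤ) : ℝ)) 1 P) :
    ∀ t : ℕ, ∀ x : ℝ,
      ((∫ ω, |x - (S (min (τ ω) t) ω : ℝ)| ∂P ≤ ∫ ω, |x - (S (τ ω) ω : ℝ)| ∂P) ∧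
        |x| ≤ ∫ ω, |x - (S (min (τ ω) t) ω : ℝ)| ∂P) ∧
      ((x ≤ -(t : ℝ) ∨ (t : ℝ) ≤ x) → ∫ ω, |x - (S (min (τ ω) t) ω : ℝ)| ∂P = |x|) :=
  stmt5_general P F X hadapted hindepF hdist S hS τ hτ hUI
end

section
/- Let S be a standard symmetric random walk, τ a stopping time with {S_{τ∧t}} uniformly integrable, and fix t ≥ 1. Let K = {k ∈ ℤ : k ≡ t−1 (mod 2)}. Then for every x ∈ ℤ, U_{S_{τ∧t}}(x) = U_{S_{τ∧(t−1)}}(x) + P(S_{t−1} = x, τ ≥ t)·1_{x ∈ K}. In particular, if t is odd then U_{S_{τ∧t}}(x) = U_{S_{τ∧(t−1)}}(x) for all odd x, and if t is even the same holds for all even x. -/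
/-!
On `{τ ≥ t}` the stopped walk moves by `X (t-1)`, a fair sign independent of `F (t-1)`, and off
that event it does not move. Averaging over the sign replaces `|d - X (t-1)|`, `d = x - S (t-1)`,
by `(|d - 1| + |d + 1|) / 2`, which for an integer `d` exceeds `|d|` by exactly `1_{d = 0}`.
So the potential grows by `P(S (t-1) = x, τ ≥ t)`, and this vanishes off the parity class of
`t - 1` because `S (t-1) ≡ t - 1 (mod 2)` almost surely.
-/

open MeasureTheory ProbabilityTheory

lemma abs_intCast_second_difference (d : ℤ) :
    (|(d : ℝ) - 1| - |(d : ℝ)| + (|(d : ℝ) + 1| - |(d : ℝ)|)) / 2 = if d = 0 then 1 else 0 := by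
  rcases lt_trichotomy d 0 with h | rfl | h
  · have : (d : ℝ) ≤ -1 := by exact_mod_cast Int.le_sub_one_of_lt h
    rw [if_neg h.ne, abs_of_nonpos (by linarith), abs_of_nonpos (by linarith),
      abs_of_nonpos (by linarith)]
    ring
  · norm_num
  · have : (1 : ℝ) ≤ d := by exact_mod_cast h
    rw [if_neg h.ne', abs_of_nonneg (by linarith), abs_of_nonneg (by linarith),
      abs_of_nonneg (by linarith)]
    ring

section
variable {Ω : Type*} {G m0 : MeasurableSpace Ω} {P : Measure Ω} [IsProbabilityMeasure P]

lemma ae_eq_one_or_eq_neg_one_s6 {ξ : Ω → ℤ} (hξ : Measurable ξ)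
    (hdist : P (ξ ⁻¹' {1}) = 1/2 ∧ P (ξ ⁻¹' {-1}) = 1/2) :
    ∀ᵐ ω ∂P, ξ ω = 1 ∨ ξ ω = -1 := by
  have hset : {ω | ξ ω = 1 ∨ ξ ω = -1} = ξ ⁻¹' {1} ∪ ξ ⁻¹' {-1} := rfl
  have hone : MeasurableSet (ξ ⁻¹' {1}) := hξ (measurableSet_singleton 1)
  have hneg : MeasurableSet (ξ ⁻¹' {-1}) := hξ (measurableSet_singleton (-1))
  rw [ae_iff_measure_eq (hset ▸ (hone.union hneg).nullMeasurableSet), hset,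
    measure_union ((Set.disjoint_singleton.2 (by norm_num)).preimage ξ) hneg, hdist.1, hdist.2,
    ENNReal.add_halves, measure_univ]

lemma integral_apply_indep_sign_eq_average {ξ : Ω → ℤ} (hξ : Measurable ξ)
    (hind : Indep (MeasurableSpace.comap ξ inferInstance) G P)
    (hdist : P (ξ ⁻¹' {1}) = 1/2 ∧ P (ξ ⁻¹' {-1}) = 1/2)
    {g : ℤ → Ω → ℝ} (hgG : ∀ a, Measurable[G] (g a)) (hg : ∀ a, Integrable (g a) P) :
    ∫ ω, g (ξ ω) ω ∂P = (∫ ω, g 1 ω ∂P + ∫ ω, g (-1) ω ∂P) / 2 := by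
  have hlevel : ∀ a : ℤ, MeasurableSet (ξ ⁻¹' {a}) := fun a => hξ (measurableSet_singleton a)
  have hsplit : (fun ω => g (ξ ω) ω)
      =ᵐ[P] fun ω => (ξ ⁻¹' {1}).indicator (g 1) ω + (ξ ⁻¹' {-1}).indicator (g (-1)) ω := by
    filter_upwards [ae_eq_one_or_eq_neg_one_s6 hξ hdist] with ω hω
    rcases hω with h | h <;> simp [Set.indicator, h]
  have hlevel_integral : ∀ a, ∫ ω in ξ ⁻¹' {a}, g a ω ∂P = P.real (ξ ⁻¹' {a}) * ∫ ω, g a ω ∂P :=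
    fun a => Indep.setIntegral_eq_mul (f := id) hξ.comap_le
      (indep_of_indep_of_le_right hind (hgG a).comap_le) (hg a).aemeasurable
      ⟨{a}, measurableSet_singleton a, rfl⟩ aestronglyMeasurable_id
  rw [integral_congr_ae hsplit, integral_add ((hg 1).indicator (hlevel 1))
    ((hg (-1)).indicator (hlevel (-1))), integral_indicator (hlevel 1),
    integral_indicator (hlevel (-1)), hlevel_integral, hlevel_integral, measureReal_def,
    measureReal_def, hdist.1, hdist.2]
  simp only [one_div, ENNReal.toReal_inv, ENNReal.toReal_ofNat]
  ring
end

section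
variable {Ω : Type*} {m0 : MeasurableSpace Ω} {P : Measure Ω} [IsProbabilityMeasure P]
  {X S : ℕ → Ω → ℤ}

lemma ae_emod_two_eq_of_sum_sign (hmeas : ∀ i, Measurable (X i))
    (hdist : ∀ i, P (X i ⁻¹' {1}) = 1/2 ∧ P (X i ⁻¹' {-1}) = 1/2)
    (hS : ∀ t ω, S t ω = ∑ i ∈ Finset.range t, X i ω) (n : ℕ) :
    ∀ᵐ ω ∂P, S n ω % 2 = n % 2 := by
  filter_upwards [ae_all_iff.2 fun i => ae_eq_one_or_eq_neg_one_s6 (hmeas i) (hdist i)] with ω hω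
  have hodd : ∀ i ∈ Finset.range n, X i ω % 2 = 1 := fun i _ => by
    rcases hω i with h | h <;> rw [h] <;> rfl
  rw [hS, Finset.sum_int_mod, Finset.sum_congr rfl hodd]
  simp

lemma measurable_filtration_of_sum_range {F : Filtration ℕ m0}
    (hadapted : ∀ i, Measurable[F (i + 1)] (X i))
    (hS : ∀ t ω, S t ω = ∑ i ∈ Finset.range t, X i ω) (n : ℕ) :
    Measurable[F n] (S n) := by
  simp_rw [funext (hS n)]
  exact Finset.measurable_sum _ fun i hi =>
    (hadapted i).mono (F.mono (Finset.mem_range.1 hi)) le_rfl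

lemma abs_sub_stopped_succ_sub (hS : ∀ t ω, S t ω = ∑ i ∈ Finset.range t, X i ω)
    (x : ℤ) (k n : ℕ) (ω : Ω) :
    |(x : ℝ) - S (min k (n + 1)) ω| - |(x : ℝ) - S (min k n) ω|
      = if n + 1 ≤ k then |(x : ℝ) - S n ω - X n ω| - |(x : ℝ) - S n ω| else 0 := by
  split_ifs with hk
  · rw [min_eq_right hk, min_eq_right (by omega), hS (n + 1), Finset.sum_range_succ, ← hS,
      Int.cast_add, sub_add_eq_sub_sub]
  · rw [show min k (n + 1) = min k n by omega, sub_self]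

theorem integral_abs_sub_stopped_succ {F : Filtration ℕ m0}
    (hmeas : ∀ i, Measurable (X i))
    (hadapted : ∀ i, Measurable[F (i + 1)] (X i))
    (hindepF : ∀ i, Indep (MeasurableSpace.comap (X i) inferInstance) (F i) P)
    (hdist : ∀ i, P (X i ⁻¹' {1}) = 1/2 ∧ P (X i ⁻¹' {-1}) = 1/2)
    (hS : ∀ t ω, S t ω = ∑ i ∈ Finset.range t, X i ω)
    {τ : Ω → ℕ} (hτ : IsStoppingTime F (fun ω => (τ ω : WithTop ℕ)))
    (hUI : UniformIntegrable (fun t ω => ((S (min (τ ω) t) ω : ℤ) : ℝ)) 1 P) (n : ℕ) (x : ℤ) :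
    ∫ ω, |(x : ℝ) - S (min (τ ω) (n + 1)) ω| ∂P
      = ∫ ω, |(x : ℝ) - S (min (τ ω) n) ω| ∂P + P.real {ω | S n ω = x ∧ n + 1 ≤ τ ω} := by
  set A := {ω | n + 1 ≤ τ ω}
  have hA : MeasurableSet[F n] A := by
    simpa [A, Order.add_one_le_iff] using hτ.measurableSet_gt n
  have hSn : Measurable[F n] (S n) := measurable_filtration_of_sum_range hadapted hS n
  let g : ℤ → Ω → ℝ := fun a =>
    A.indicator ((fun s : ℤ => |(x : ℝ) - s - a| - |(x : ℝ) - s|) ∘ S n)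
  have hgF : ∀ a, Measurable[F n] (g a) := fun a =>
    (Measurable.of_discrete.comp hSn).indicator hA
  have hg : ∀ a, Integrable (g a) P := fun a =>
    (integrable_const |(a : ℝ)|).mono' ((hgF a).mono (F.le n) le_rfl).aestronglyMeasurable
      (ae_of_all _ fun ω => (norm_indicator_le_norm_self _ ω).trans <|
        (abs_abs_sub_abs_le_abs_sub _ _).trans_eq (by rw [sub_sub_cancel_left, abs_neg]))
  have hincr : ∀ ω, |(x : ℝ) - S (min (τ ω) (n + 1)) ω| - |(x : ℝ) - S (min (τ ω) n) ω|
      = g (X n ω) ω := fun ω => by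
    simp only [abs_sub_stopped_succ_sub hS, g, Set.indicator_apply, Function.comp_apply]
    rfl
  set B := {ω | S n ω = x ∧ n + 1 ≤ τ ω}
  have havg : ∀ ω, (g 1 ω + g (-1) ω) / 2 = B.indicator 1 ω := fun ω => by
    by_cases hω : ω ∈ A
    · have hB : ω ∈ B ↔ x - S n ω = 0 :=
        ⟨fun h => sub_eq_zero.2 h.1.symm, fun h => ⟨(sub_eq_zero.1 h).symm, hω⟩⟩
      simp only [g, Set.indicator_of_mem hω, Function.comp_apply, Set.indicator_apply, hB,
        Pi.one_apply]
      simpa using abs_intCast_second_difference (x - S n ω)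
    · simp only [g, Set.indicator_of_notMem hω,
        Set.indicator_of_notMem (show ω ∉ B from fun h => hω h.2)]
      norm_num
  have hU : ∀ k, Integrable (fun ω => |(x : ℝ) - S (min (τ ω) k) ω|) P := fun k =>
    ((integrable_const _).sub (memLp_one_iff_integrable.1
      ⟨hUI.1 k, (hUI.2.2.choose_spec k).trans_lt ENNReal.coe_lt_top⟩)).abs
  have hB : MeasurableSet B := F.le n _ ((hSn (measurableSet_singleton x)).inter hA)
  calc ∫ ω, |(x : ℝ) - S (min (τ ω) (n + 1)) ω| ∂P
      = ∫ ω, |(x : ℝ) - S (min (τ ω) n) ω| ∂P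
        + ∫ ω, (|(x : ℝ) - S (min (τ ω) (n + 1)) ω| - |(x : ℝ) - S (min (τ ω) n) ω|) ∂P := by
        rw [integral_sub (hU _) (hU _)]
        ring
    _ = ∫ ω, |(x : ℝ) - S (min (τ ω) n) ω| ∂P + ∫ ω, g (X n ω) ω ∂P := by simp_rw [hincr]
    _ = ∫ ω, |(x : ℝ) - S (min (τ ω) n) ω| ∂P + (∫ ω, g 1 ω ∂P + ∫ ω, g (-1) ω ∂P) / 2 := by
        rw [integral_apply_indep_sign_eq_average (hmeas n) (hindepF n) (hdist n) hgF hg]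
    _ = ∫ ω, |(x : ℝ) - S (min (τ ω) n) ω| ∂P + P.real B := by
        rw [← integral_add (hg 1) (hg (-1)), ← integral_div, funext havg, integral_indicator_one hB]
end

theorem stmt6_general {Ω : Type*} {m0 : MeasurableSpace Ω} (P : Measure Ω) [IsProbabilityMeasure P]
    (F : Filtration ℕ m0)
    (X : ℕ → Ω → ℤ)
    (hmeas : ∀ i, Measurable (X i))
    (hadapted : ∀ i, Measurable[F (i + 1)] (X i))
    (hindepF : ∀ i, Indep (MeasurableSpace.comap (X i) inferInstance) (F i) P)
    (hdist : ∀ i, P (X i ⁻¹' {1}) = 1/2 ∧ P (X i ⁻¹' {-1}) = 1/2)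
    (S : ℕ → Ω → ℤ) (hS : ∀ t ω, S t ω = ∑ i ∈ Finset.range t, X i ω)
    (τ : Ω → ℕ) (hτ : IsStoppingTime F (fun ω => (τ ω : WithTop ℕ)))
    (hUI : UniformIntegrable (fun t ω => ((S (min (τ ω) t) ω : ℤ) : ℝ)) 1 P)
    (t : ℕ) (ht : 1 ≤ t) :
    (∀ x : ℤ,
      ∫ ω, |(x : ℝ) - (S (min (τ ω) t) ω : ℝ)| ∂P
        = (∫ ω, |(x : ℝ) - (S (min (τ ω) (t - 1)) ω : ℝ)| ∂P)
          + (P {ω | S (t - 1) ω = x ∧ t ≤ τ ω}).toReal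
              * (if x % 2 = ((t : ℤ) - 1) % 2 then 1 else 0)) ∧
    (Odd t → ∀ x : ℤ, Odd x →
      ∫ ω, |(x : ℝ) - (S (min (τ ω) t) ω : ℝ)| ∂P
        = ∫ ω, |(x : ℝ) - (S (min (τ ω) (t - 1)) ω : ℝ)| ∂P) ∧
    (Even t → ∀ x : ℤ, Even x →
      ∫ ω, |(x : ℝ) - (S (min (τ ω) t) ω : ℝ)| ∂P
        = ∫ ω, |(x : ℝ) - (S (min (τ ω) (t - 1)) ω : ℝ)| ∂P) := by
  obtain ⟨n, rfl⟩ : ∃ n, t = n + 1 := ⟨t - 1, by omega⟩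
  have step := integral_abs_sub_stopped_succ hmeas hadapted hindepF hdist hS hτ hUI n
  have null (x : ℤ) (hx : x % 2 ≠ n % 2) : P {ω | S n ω = x ∧ n + 1 ≤ τ ω} = 0 :=
    measure_mono_null (fun ω hω hpar => hx (hω.1 ▸ hpar))
      (ae_iff.1 (ae_emod_two_eq_of_sum_sign hmeas hdist hS n))
  have main (x : ℤ) : ∫ ω, |(x : ℝ) - S (min (τ ω) (n + 1)) ω| ∂P
      = ∫ ω, |(x : ℝ) - S (min (τ ω) n) ω| ∂P
        + (P {ω | S n ω = x ∧ n + 1 ≤ τ ω}).toReal * if x % 2 = n % 2 then 1 else 0 := by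
    split_ifs with hx
    · rw [step, mul_one, measureReal_def]
    · rw [step, mul_zero, measureReal_def, null x hx, ENNReal.toReal_zero]
  simp only [Nat.add_sub_cancel, Nat.cast_add, Nat.cast_one, add_sub_cancel_right]
  refine ⟨main, fun hodd x hx => ?_, fun heven x hx => ?_⟩
  · rw [Nat.odd_add_one, Nat.not_odd_iff_even] at hodd
    have hpar : x % 2 ≠ n % 2 := by rw [Int.odd_iff.1 hx, Int.even_iff.1 (hodd.natCast)]; decide
    simpa [hpar] using main x
  · rw [Nat.even_add_one, Nat.not_even_iff_odd] at heven
    have hpar : x % 2 ≠ n % 2 := by rw [Int.even_iff.1 hx, Int.odd_iff.1 (heven.natCast)]; decide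
    simpa [hpar] using main x

/-- One-step evolution of the potential of the stopped walk: for `t ≥ 1` and `x ∈ ℤ`,
`U_{S_{τ∧t}}(x) = U_{S_{τ∧(t-1)}}(x) + P(S_{t-1} = x, τ ≥ t)·1_{x ≡ t-1 (mod 2)}`. -/
theorem stmt6 {Ω : Type*} {m0 : MeasurableSpace Ω} (P : Measure Ω) [IsProbabilityMeasure P]
    (F : Filtration ℕ m0)
    (X : ℕ → Ω → ℤ)
    (hmeas : ∀ i, Measurable (X i))
    (hadapted : ∀ i, Measurable[F (i + 1)] (X i))
    (hindep : iIndepFun X P)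
    (hindepF : ∀ i, Indep (MeasurableSpace.comap (X i) inferInstance) (F i) P)
    (hdist : ∀ i, P (X i ⁻¹' {1}) = 1/2 ∧ P (X i ⁻¹' {-1}) = 1/2)
    (S : ℕ → Ω → ℤ) (hS : ∀ t ω, S t ω = ∑ i ∈ Finset.range t, X i ω)
    (τ : Ω → ℕ) (hτ : IsStoppingTime F (fun ω => (τ ω : WithTop ℕ)))
    (hUI : UniformIntegrable (fun t ω => ((S (min (τ ω) t) ω : ℤ) : ℝ)) 1 P)
    (t : ℕ) (ht : 1 ≤ t) :
    (∀ x : ℤ,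
      ∫ ω, |(x : ℝ) - (S (min (τ ω) t) ω : ℝ)| ∂P
        = (∫ ω, |(x : ℝ) - (S (min (τ ω) (t - 1)) ω : ℝ)| ∂P)
          + (P {ω | S (t - 1) ω = x ∧ t ≤ τ ω}).toReal
              * (if x % 2 = ((t : ℤ) - 1) % 2 then 1 else 0)) ∧
    (Odd t → ∀ x : ℤ, Odd x →
      ∫ ω, |(x : ℝ) - (S (min (τ ω) t) ω : ℝ)| ∂P
        = ∫ ω, |(x : ℝ) - (S (min (τ ω) (t - 1)) ω : ℝ)| ∂P) ∧
    (Even t → ∀ x : ℤ, Even x →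
      ∫ ω, |(x : ℝ) - (S (min (τ ω) t) ω : ℝ)| ∂P
        = ∫ ω, |(x : ℝ) - (S (min (τ ω) (t - 1)) ω : ℝ)| ∂P) :=
  stmt6_general P F X hmeas hadapted hindepF hdist S hS τ hτ hUI t ht
end

section
/- With the evolutional functions U_t of a centered integrable measure μ on ℤ (U_0(x) = |x|, U_t(x) = min{(U_{t−1}(x−1)+U_{t−1}(x+1))/2, U_μ(x)}), one has U_t(x) = U_{t+1}(x) whenever t is odd and x is even, or t is even and x is odd. -/
open scoped BigOperators

/-- The evolutional functions of μ: `U_0(x) = |x|`,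
`U_t(x) = min((U_{t-1}(x-1)+U_{t-1}(x+1))/2, U_μ(x))`. -/
noncomputable def evol (μ : ℤ → ℝ) : ℕ → ℤ → ℝ
  | 0, x => |(x : ℝ)|
  | t + 1, x => min ((evol μ t (x - 1) + evol μ t (x + 1)) / 2) (potential μ x)

lemma abs_le_potential (μ : ℤ → ℝ) (hμ : IsCenteredPMF μ) (x : ℤ) :
    |(x : ℝ)| ≤ potential μ x := by
  obtain ⟨hpos, hsum1, habs, hmean⟩ := hμ
  have hμs : Summable μ := hsum1.summable
  have hymu : Summable (fun y : ℤ => (y : ℝ) * μ y) := by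
    apply Summable.of_abs
    have : (fun y : ℤ => |(y : ℝ) * μ y|) = fun y : ℤ => |(y : ℝ)| * μ y := by
      funext y; rw [abs_mul, abs_of_nonneg (hpos y)]
    rw [this]; exact habs
  have hs : Summable (fun y : ℤ => |(x : ℝ) - y| * μ y) := by
    apply Summable.of_nonneg_of_le (fun y => mul_nonneg (abs_nonneg _) (hpos y))
      (f := fun y : ℤ => |(x : ℝ)| * μ y + |(y : ℝ)| * μ y)
      (fun y => ?_) ((hμs.mul_left _).add habs)
    have : |(x : ℝ) - y| ≤ |(x : ℝ)| + |(y : ℝ)| := abs_sub _ _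
    calc |(x : ℝ) - y| * μ y ≤ (|(x : ℝ)| + |(y : ℝ)|) * μ y :=
          mul_le_mul_of_nonneg_right this (hpos y)
      _ = |(x : ℝ)| * μ y + |(y : ℝ)| * μ y := by ring
  have hs2 : Summable (fun y : ℤ => ((x : ℝ) - y) * μ y) := by
    apply Summable.of_abs
    have : (fun y : ℤ => |((x : ℝ) - y) * μ y|) = fun y : ℤ => |(x : ℝ) - y| * μ y := by
      funext y; rw [abs_mul, abs_of_nonneg (hpos y)]
    rw [this]; exact hs
  have hval : ∑' y : ℤ, ((x : ℝ) - y) * μ y = (x : ℝ) := by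
    have h1 : (fun y : ℤ => ((x : ℝ) - y) * μ y)
        = fun y : ℤ => (x : ℝ) * μ y - (y : ℝ) * μ y := by funext y; ring
    rw [h1, Summable.tsum_sub (hμs.mul_left _) hymu, tsum_mul_left, hsum1.tsum_eq, hmean, mul_one, sub_zero]
  calc |(x : ℝ)| = |∑' y : ℤ, ((x : ℝ) - y) * μ y| := by rw [hval]
    _ ≤ ∑' y : ℤ, |((x : ℝ) - y) * μ y| := by
        have hsn : Summable (fun y : ℤ => ‖((x : ℝ) - y) * μ y‖) := by
          simpa only [Real.norm_eq_abs, abs_mul] using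
            (by simpa only [abs_of_nonneg (hpos _)] using hs :
              Summable (fun y : ℤ => |(x : ℝ) - y| * |μ y|))
        simpa only [Real.norm_eq_abs] using norm_tsum_le_tsum_norm hsn
    _ = potential μ x := by
        unfold potential
        congr 1; funext y; rw [abs_mul, abs_of_nonneg (hpos y)]

lemma evol_odd_zero (μ : ℤ → ℝ) (hμ : IsCenteredPMF μ) (x : ℤ) (hx : Odd x) :
    evol μ 1 x = |(x : ℝ)| := by
  have hx0 : x ≠ 0 := by rintro rfl; exact ((by decide : ¬ Odd (0:ℤ))) hx
  have havg : (|((x - 1 : ℤ) : ℝ)| + |((x + 1 : ℤ) : ℝ)|) / 2 = |(x : ℝ)| := by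
    rcases lt_or_gt_of_ne hx0 with hneg | hpos
    · have h1 : x ≤ -1 := by omega
      have : ((x : ℝ)) ≤ -1 := by exact_mod_cast h1
      push_cast
      rw [abs_of_nonpos (by linarith), abs_of_nonpos (by linarith), abs_of_nonpos (by linarith)]
      ring
    · have h1 : (1 : ℤ) ≤ x := hpos
      have : (1 : ℝ) ≤ (x : ℝ) := by exact_mod_cast h1
      push_cast
      rw [abs_of_nonneg (by linarith), abs_of_nonneg (by linarith), abs_of_nonneg (by linarith)]
      ring
  show min ((evol μ 0 (x - 1) + evol μ 0 (x + 1)) / 2) (potential μ x) = |(x : ℝ)|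
  simp only [evol]
  rw [havg]
  exact min_eq_left (abs_le_potential μ hμ x)

theorem stmt8 (μ : ℤ → ℝ) (hμ : IsCenteredPMF μ) (t : ℕ) (x : ℤ)
    (h : (Odd t ∧ Even x) ∨ (Even t ∧ Odd x)) :
    evol μ t x = evol μ (t + 1) x := by
  induction t generalizing x with
  | zero =>
    rcases h with ⟨ht, _⟩ | ⟨_, hx⟩
    · exact absurd ht (by simp)
    · exact (evol_odd_zero μ hμ x hx).symm
  | succ t ih =>
    have hpar : ∀ y : ℤ, (y = x - 1 ∨ y = x + 1) →
        (Odd t ∧ Even y) ∨ (Even t ∧ Odd y) := by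
      intro y hy
      rcases h with ⟨ht, hx⟩ | ⟨ht, hx⟩
      · rw [Nat.odd_iff] at ht; rw [Int.even_iff] at hx
        right
        refine ⟨by rw [Nat.even_iff]; omega, by rw [Int.odd_iff]; omega⟩
      · rw [Nat.even_iff] at ht; rw [Int.odd_iff] at hx
        left
        refine ⟨by rw [Nat.odd_iff]; omega, by rw [Int.even_iff]; omega⟩
    have hm : evol μ t (x - 1) = evol μ (t + 1) (x - 1) := ih _ (hpar _ (Or.inl rfl))
    have hp : evol μ t (x + 1) = evol μ (t + 1) (x + 1) := ih _ (hpar _ (Or.inr rfl))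
    show min ((evol μ t (x - 1) + evol μ t (x + 1)) / 2) (potential μ x)
      = min ((evol μ (t + 1) (x - 1) + evol μ (t + 1) (x + 1)) / 2) (potential μ x)
    rw [hm, hp]
end

section
/- Let S be a standard symmetric random walk, T ≥ 1, μ a centered probability measure on ℤ∩[−T,T], and τ ≤ T any stopping time (possibly randomized via an independent uniform variable in F₀) with S_τ ∼ μ. Then for every t ≤ T and x ∈ ℤ, U_{S_{τ∧t}}(x) ≤ U_t(x), where U_t are the evolutional functions of μ. -/
open MeasureTheory ProbabilityTheory

/-!
Write `Y t = S (min τ t)`. On `{τ ≤ t}` the walk is frozen, while on `{t < τ}`, an event of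
`F t`, it makes a fair `±1` step independent of `F t`. Hence
`E|x - Y (t+1)| = E[|x - Y t|; τ ≤ t] + E[(|x - 1 - Y t| + |x + 1 - Y t|) / 2; t < τ]`,
and the midpoint convexity `|a| ≤ (|a - 1| + |a + 1|) / 2`, applied on either event, gives
`U_{Y t}(x) ≤ U_{Y (t+1)}(x) ≤ (U_{Y t}(x - 1) + U_{Y t}(x + 1)) / 2`.
Since `Y T = S τ ∼ μ`, the first inequality bounds every `U_{Y t}` by `U_μ`; with the second,
induction on `t` yields `U_{Y t} ≤ U_t`.
-/

lemma ae_eq_one_or_eq_neg_one_s10 {Ω : Type*} [MeasurableSpace Ω] {P : Measure Ω}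
    [IsProbabilityMeasure P] {ε : Ω → ℤ} (hε : Measurable ε)
    (hhalf : P (ε ⁻¹' {1}) = 1 / 2 ∧ P (ε ⁻¹' {-1}) = 1 / 2) :
    ∀ᵐ ω ∂P, ε ω = 1 ∨ ε ω = -1 := by
  have hdisj : Disjoint (ε ⁻¹' {1}) (ε ⁻¹' {-1}) :=
    (Set.disjoint_singleton.mpr (by decide)).preimage ε
  have hU : MeasurableSet (ε ⁻¹' {1} ∪ ε ⁻¹' {-1}) :=
    (hε (measurableSet_singleton _)).union (hε (measurableSet_singleton _))
  have hfull : P (ε ⁻¹' {1} ∪ ε ⁻¹' {-1}) = 1 := by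
    rw [measure_union hdisj (hε (measurableSet_singleton _)), hhalf.1, hhalf.2,
      ENNReal.add_halves]
  filter_upwards [mem_ae_iff.mpr ((prob_compl_eq_zero_iff hU).mpr hfull)] with ω hω
  simpa using hω

lemma setIntegral_inter_preimage_of_indep {Ω β : Type*} {m m0 : MeasurableSpace Ω}
    [MeasurableSpace β] {P : Measure[m0] Ω} [IsFiniteMeasure P] (hm : m ≤ m0) {X : Ω → β}
    (hX : Measurable X) (hind : Indep (MeasurableSpace.comap X inferInstance) m P)
    {B : Set β} (hB : MeasurableSet B) {A : Set Ω} (hA : MeasurableSet[m] A) {g : Ω → ℝ}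
    (hg : Measurable[m] g) :
    ∫ ω in A ∩ X ⁻¹' B, g ω ∂P = P.real (X ⁻¹' B) * ∫ ω in A, g ω ∂P := by
  have hXB : MeasurableSet (X ⁻¹' B) := hX hB
  have hindep : IndepFun ((X ⁻¹' B).indicator (1 : Ω → ℝ)) (A.indicator g) P := by
    rw [IndepFun_iff_Indep]
    refine indep_of_indep_of_le hind ?_ ?_
    · exact Measurable.comap_le (Measurable.indicator (m := MeasurableSpace.comap X inferInstance)
        measurable_const ⟨B, hB, rfl⟩)
    · exact (hg.indicator hA).comap_le
  calc ∫ ω in A ∩ X ⁻¹' B, g ω ∂P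
      = ∫ ω, (X ⁻¹' B).indicator 1 ω * A.indicator g ω ∂P := by
        rw [Set.inter_comm, ← setIntegral_indicator (hm A hA), ← integral_indicator hXB]
        congr 1 with ω
        by_cases h : ω ∈ X ⁻¹' B <;> simp [h]
    _ = P.real (X ⁻¹' B) * ∫ ω in A, g ω ∂P := by
        rw [hindep.integral_fun_mul_eq_mul_integral
          ((measurable_one.indicator hXB).aestronglyMeasurable)
          ((hg.mono hm le_rfl).indicator (hm A hA)).aestronglyMeasurable,
          integral_indicator_one hXB, integral_indicator (hm A hA)]

lemma setIntegral_comp_add_sign_of_indep {Ω : Type*} {m m0 : MeasurableSpace Ω}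
    {P : Measure[m0] Ω} [IsProbabilityMeasure P] (hm : m ≤ m0) {ε : Ω → ℤ} (hε : Measurable ε)
    (hind : Indep (MeasurableSpace.comap ε inferInstance) m P)
    (hhalf : P (ε ⁻¹' {1}) = 1 / 2 ∧ P (ε ⁻¹' {-1}) = 1 / 2) {A : Set Ω}
    (hA : MeasurableSet[m] A) {G : Ω → ℝ} (hG : Measurable[m] G) {φ : ℝ → ℝ}
    (hφ : Measurable φ) (hi₁ : Integrable (fun ω => φ (G ω + 1)) P)
    (hi₂ : Integrable (fun ω => φ (G ω - 1)) P) :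
    ∫ ω in A, φ (G ω + ε ω) ∂P =
      (∫ ω in A, φ (G ω + 1) ∂P + ∫ ω in A, φ (G ω - 1) ∂P) / 2 := by
  have hE₁ : MeasurableSet (ε ⁻¹' {1}) := hε (measurableSet_singleton _)
  have hE₂ : MeasurableSet (ε ⁻¹' {-1}) := hε (measurableSet_singleton _)
  have hsplit : (fun ω => φ (G ω + ε ω)) =ᵐ[P] fun ω =>
      (ε ⁻¹' {1}).indicator (fun ω => φ (G ω + 1)) ω +
        (ε ⁻¹' {-1}).indicator (fun ω => φ (G ω - 1)) ω := by
    filter_upwards [ae_eq_one_or_eq_neg_one_s10 hε hhalf] with ω hω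
    rcases hω with h | h <;> simp [h, sub_eq_add_neg]
  have hreal : ∀ z, P (ε ⁻¹' {z}) = 1 / 2 → P.real (ε ⁻¹' {z}) = 1 / 2 := fun z hz => by
    simp [measureReal_def, hz]
  rw [integral_congr_ae (ae_restrict_of_ae hsplit),
    integral_add (hi₁.indicator hE₁).integrableOn (hi₂.indicator hE₂).integrableOn,
    setIntegral_indicator hE₁, setIntegral_indicator hE₂,
    setIntegral_inter_preimage_of_indep hm hε hind (measurableSet_singleton _) hA
      (g := fun ω => φ (G ω + 1)) (hφ.comp (hG.add_const 1)),
    setIntegral_inter_preimage_of_indep hm hε hind (measurableSet_singleton _) hA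
      (g := fun ω => φ (G ω - 1)) (hφ.comp (hG.sub_const 1)),
    hreal 1 hhalf.1, hreal (-1) hhalf.2]
  ring

lemma integral_comp_eq_tsum {Ω β : Type*} [MeasurableSpace Ω] [MeasurableSpace β] [Countable β]
    [DiscreteMeasurableSpace β] {P : Measure Ω} {Z : Ω → β} (hZ : Measurable Z) {f : β → ℝ}
    (hf : Integrable (fun ω => f (Z ω)) P) :
    ∫ ω, f (Z ω) ∂P = ∑' z, f z * P.real (Z ⁻¹' {z}) := by
  have hfm : Measurable f := .of_discrete
  rw [← integral_map hZ.aemeasurable hfm.aestronglyMeasurable,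
    integral_countable ((integrable_map_measure hfm.aestronglyMeasurable hZ.aemeasurable).mpr hf)]
  simp_rw [map_measureReal_apply hZ (measurableSet_singleton _), smul_eq_mul, mul_comm]

lemma setIntegral_abs_sub_le_midpoint {Ω : Type*} [MeasurableSpace Ω] {P : Measure Ω}
    [IsFiniteMeasure P] {Y : Ω → ℝ} (hY : Integrable Y P) (x : ℝ) (E : Set Ω) :
    ∫ ω in E, |x - Y ω| ∂P ≤ (∫ ω in E, |x - 1 - Y ω| ∂P + ∫ ω in E, |x + 1 - Y ω| ∂P) / 2 := by
  have hint : ∀ c, Integrable (fun ω => |c - Y ω|) P := fun c => ((integrable_const c).sub hY).abs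
  rw [← integral_add (hint _).integrableOn (hint _).integrableOn, ← integral_div]
  refine integral_mono (hint x).integrableOn (((hint _).add (hint _)).integrableOn.div_const 2)
    fun ω => ?_
  have := abs_add_le (x - 1 - Y ω) (x + 1 - Y ω)
  rw [show x - 1 - Y ω + (x + 1 - Y ω) = 2 * (x - Y ω) by ring, abs_mul, abs_two] at this
  linarith

structure IsSimpleSymmetricWalk {Ω : Type*} {m0 : MeasurableSpace Ω} (P : Measure Ω)
    (F : Filtration ℕ m0) (S X : ℕ → Ω → ℤ) : Prop where
  zero : ∀ ω, S 0 ω = 0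
  succ : ∀ t ω, S (t + 1) ω = S t ω + X t ω
  measurable : ∀ t, Measurable[F t] (S t)
  indep : ∀ t, Indep (MeasurableSpace.comap (X t) inferInstance) (F t) P
  sign : ∀ t, P (X t ⁻¹' {1}) = 1 / 2 ∧ P (X t ⁻¹' {-1}) = 1 / 2

/-- The potential `U_{S_{τ∧t}}` of the stopped walk. -/
noncomputable def stoppedPotential {Ω : Type*} [MeasurableSpace Ω] (P : Measure Ω)
    (S : ℕ → Ω → ℤ) (τ : Ω → ℕ) (t : ℕ) (x : ℝ) : ℝ :=
  ∫ ω, |x - (S (min (τ ω) t) ω : ℝ)| ∂P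

lemma MeasureTheory.IsStoppingTime.measurableSet_gt_coe {Ω : Type*} {m0 : MeasurableSpace Ω}
    {F : Filtration ℕ m0} {τ : Ω → ℕ} (hτ : IsStoppingTime F (fun ω => (τ ω : WithTop ℕ)))
    (t : ℕ) : MeasurableSet[F t] {ω | t < τ ω} := by
  simpa using hτ.measurableSet_gt t

namespace IsSimpleSymmetricWalk

variable {Ω : Type*} {m0 : MeasurableSpace Ω} {P : Measure Ω}
  {F : Filtration ℕ m0} {S X : ℕ → Ω → ℤ} {τ : Ω → ℕ}

lemma stopped_succ (hW : IsSimpleSymmetricWalk P F S X) (t : ℕ) (ω : Ω) :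
    S (min (τ ω) (t + 1)) ω = S (min (τ ω) t) ω + if t < τ ω then X t ω else 0 := by
  by_cases h : t < τ ω
  · rw [min_eq_right h, min_eq_right h.le, if_pos h, hW.succ]
  · push Not at h
    rw [min_eq_left h, min_eq_left (h.trans t.le_succ), if_neg h.not_gt, add_zero]

lemma measurable_step (hW : IsSimpleSymmetricWalk P F S X) (t : ℕ) :
    Measurable[F (t + 1)] (X t) := by
  have : X t = fun ω => S (t + 1) ω - S t ω := funext fun ω => by rw [hW.succ]; ring
  rw [this]
  exact (hW.measurable (t + 1)).sub ((hW.measurable t).mono (F.mono t.le_succ) le_rfl)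

lemma integrable_step [IsProbabilityMeasure P] (hW : IsSimpleSymmetricWalk P F S X) (t : ℕ) :
    Integrable (fun ω => (X t ω : ℝ)) P := by
  have hX : Measurable (X t) := (hW.measurable_step t).mono (F.le _) le_rfl
  refine .of_bound (Measurable.of_discrete.comp hX).aestronglyMeasurable 1 ?_
  filter_upwards [ae_eq_one_or_eq_neg_one_s10 hX (hW.sign t)] with ω hω
  rcases hω with h | h <;> simp [h]

lemma measurable_stopped (hW : IsSimpleSymmetricWalk P F S X)
    (hτ : IsStoppingTime F (fun ω => (τ ω : WithTop ℕ))) (t : ℕ) :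
    Measurable[F t] (fun ω => S (min (τ ω) t) ω) := by
  induction t with
  | zero => simpa using hW.measurable 0
  | succ t ih =>
    simp_rw [hW.stopped_succ]
    exact (ih.mono (F.mono t.le_succ) le_rfl).add <| Measurable.ite
      (F.mono t.le_succ _ (hτ.measurableSet_gt_coe t)) (hW.measurable_step t) measurable_const

lemma integrable_stopped [IsProbabilityMeasure P] (hW : IsSimpleSymmetricWalk P F S X)
    (hτ : IsStoppingTime F (fun ω => (τ ω : WithTop ℕ))) (t : ℕ) :
    Integrable (fun ω => (S (min (τ ω) t) ω : ℝ)) P := by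
  induction t with
  | zero => simp [hW.zero]
  | succ t ih =>
    have hA := F.le t _ (hτ.measurableSet_gt_coe t)
    refine (ih.add ((hW.integrable_step t).indicator hA)).congr (.of_forall fun ω => ?_)
    simp only [Pi.add_apply, hW.stopped_succ, Set.indicator_apply, Set.mem_ofPred_eq]
    split_ifs <;> push_cast <;> ring

lemma integrable_abs_sub_stopped [IsProbabilityMeasure P] (hW : IsSimpleSymmetricWalk P F S X)
    (hτ : IsStoppingTime F (fun ω => (τ ω : WithTop ℕ))) (t : ℕ) (c : ℝ) :
    Integrable (fun ω => |c - (S (min (τ ω) t) ω : ℝ)|) P :=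
  ((integrable_const c).sub (hW.integrable_stopped hτ t)).abs

lemma stoppedPotential_succ [IsProbabilityMeasure P] (hW : IsSimpleSymmetricWalk P F S X)
    (hτ : IsStoppingTime F (fun ω => (τ ω : WithTop ℕ))) (t : ℕ) (x : ℝ) :
    stoppedPotential P S τ (t + 1) x =
      ∫ ω in {ω | t < τ ω}ᶜ, |x - (S (min (τ ω) t) ω : ℝ)| ∂P +
        (∫ ω in {ω | t < τ ω}, |x - 1 - (S (min (τ ω) t) ω : ℝ)| ∂P +
          ∫ ω in {ω | t < τ ω}, |x + 1 - (S (min (τ ω) t) ω : ℝ)| ∂P) / 2 := by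
  have hAt := hτ.measurableSet_gt_coe t
  have hA := F.le t _ hAt
  rw [stoppedPotential, ← integral_add_compl hA (hW.integrable_abs_sub_stopped hτ (t + 1) x),
    add_comm]
  congr 1
  · refine setIntegral_congr_fun hA.compl fun ω hω => ?_
    rw [hW.stopped_succ, if_neg (show ¬t < τ ω from hω), add_zero]
  · have hX : Measurable (X t) := (hW.measurable_step t).mono (F.le _) le_rfl
    have hint : ∀ c : ℝ, Integrable (fun ω => |x - ((S (min (τ ω) t) ω : ℝ) + c)|) P :=
      fun c => ((integrable_const x).sub
        ((hW.integrable_stopped hτ t).add (integrable_const c))).abs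
    calc ∫ ω in {ω | t < τ ω}, |x - (S (min (τ ω) (t + 1)) ω : ℝ)| ∂P
        = ∫ ω in {ω | t < τ ω}, |x - ((S (min (τ ω) t) ω : ℝ) + X t ω)| ∂P :=
          setIntegral_congr_fun hA fun ω hω => by
            rw [hW.stopped_succ, if_pos (show t < τ ω from hω), Int.cast_add]
      _ = (∫ ω in {ω | t < τ ω}, |x - ((S (min (τ ω) t) ω : ℝ) + 1)| ∂P +
            ∫ ω in {ω | t < τ ω}, |x - ((S (min (τ ω) t) ω : ℝ) - 1)| ∂P) / 2 :=
          setIntegral_comp_add_sign_of_indep (F.le t) hX (hW.indep t) (hW.sign t) hAt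
            (Measurable.of_discrete.comp (hW.measurable_stopped hτ t))
            (measurable_const.sub measurable_id |>.abs) (hint 1)
            (by simpa [sub_eq_add_neg] using hint (-1))
      _ = _ := by simp only [sub_add_eq_sub_sub_swap, sub_sub_eq_add_sub]

lemma stoppedPotential_le_succ [IsProbabilityMeasure P] (hW : IsSimpleSymmetricWalk P F S X)
    (hτ : IsStoppingTime F (fun ω => (τ ω : WithTop ℕ))) (t : ℕ) (x : ℝ) :
    stoppedPotential P S τ t x ≤ stoppedPotential P S τ (t + 1) x := by
  rw [hW.stoppedPotential_succ hτ, stoppedPotential,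
    ← integral_add_compl (F.le t _ (hτ.measurableSet_gt_coe t))
      (hW.integrable_abs_sub_stopped hτ t x)]
  linarith [setIntegral_abs_sub_le_midpoint (hW.integrable_stopped hτ t) x {ω | t < τ ω}]

lemma stoppedPotential_succ_le [IsProbabilityMeasure P] (hW : IsSimpleSymmetricWalk P F S X)
    (hτ : IsStoppingTime F (fun ω => (τ ω : WithTop ℕ))) (t : ℕ) (x : ℝ) :
    stoppedPotential P S τ (t + 1) x ≤
      (stoppedPotential P S τ t (x - 1) + stoppedPotential P S τ t (x + 1)) / 2 := by
  have hA := F.le t _ (hτ.measurableSet_gt_coe t)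
  rw [hW.stoppedPotential_succ hτ, stoppedPotential, stoppedPotential,
    ← integral_add_compl hA (hW.integrable_abs_sub_stopped hτ t (x - 1)),
    ← integral_add_compl hA (hW.integrable_abs_sub_stopped hτ t (x + 1))]
  linarith [setIntegral_abs_sub_le_midpoint (hW.integrable_stopped hτ t) x {ω | t < τ ω}ᶜ]

lemma stoppedPotential_eq_potential [IsProbabilityMeasure P]
    (hW : IsSimpleSymmetricWalk P F S X) (hτ : IsStoppingTime F (fun ω => (τ ω : WithTop ℕ)))
    {T : ℕ} (hτT : ∀ ω, τ ω ≤ T) {μ : ℤ → ℝ}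
    (hlaw : ∀ z : ℤ, (P {ω | S (τ ω) ω = z}).toReal = μ z) (x : ℤ) :
    stoppedPotential P S τ T x = potential μ x := by
  rw [stoppedPotential, integral_comp_eq_tsum ((hW.measurable_stopped hτ T).mono (F.le T) le_rfl)
    (f := fun z : ℤ => |(x : ℝ) - z|) (hW.integrable_abs_sub_stopped hτ T x), potential]
  congr 1 with z
  simp_rw [← hlaw z, measureReal_def, min_eq_left (hτT _)]
  rfl

lemma stoppedPotential_le_evol [IsProbabilityMeasure P]
    (hW : IsSimpleSymmetricWalk P F S X) (hτ : IsStoppingTime F (fun ω => (τ ω : WithTop ℕ)))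
    {T : ℕ} (hτT : ∀ ω, τ ω ≤ T) {μ : ℤ → ℝ}
    (hlaw : ∀ z : ℤ, (P {ω | S (τ ω) ω = z}).toReal = μ z) :
    ∀ t ≤ T, ∀ x : ℤ, stoppedPotential P S τ t x ≤ evol μ t x := by
  intro t
  induction t with
  | zero => simp [stoppedPotential, hW.zero, evol]
  | succ t ih =>
    intro ht x
    refine le_min ?_ ?_
    · have h₁ := ih (t.le_succ.trans ht) (x - 1)
      have h₂ := ih (t.le_succ.trans ht) (x + 1)
      push_cast at h₁ h₂
      linarith [hW.stoppedPotential_succ_le hτ t x]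
    · rw [← hW.stoppedPotential_eq_potential hτ hτT hlaw x]
      exact monotone_nat_of_le_succ (fun s => hW.stoppedPotential_le_succ hτ s x) ht

end IsSimpleSymmetricWalk

theorem stmt10_general {Ω : Type*} {m0 : MeasurableSpace Ω} (P : Measure Ω) [IsProbabilityMeasure P]
    (F : Filtration ℕ m0)
    (X : ℕ → Ω → ℤ)
    (hadapted : ∀ i, Measurable[F (i + 1)] (X i))
    (hindepF : ∀ i, Indep (MeasurableSpace.comap (X i) inferInstance) (F i) P)
    (hdist : ∀ i, P (X i ⁻¹' {1}) = 1/2 ∧ P (X i ⁻¹' {-1}) = 1/2)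
    (S : ℕ → Ω → ℤ) (hS : ∀ t ω, S t ω = ∑ i ∈ Finset.range t, X i ω)
    (T : ℕ)
    (μ : ℤ → ℝ)
    (τ : Ω → ℕ) (hτ : IsStoppingTime F (fun ω => (τ ω : WithTop ℕ))) (hτT : ∀ ω, τ ω ≤ T)
    (hlaw : ∀ z : ℤ, (P {ω | S (τ ω) ω = z}).toReal = μ z) :
    ∀ t : ℕ, t ≤ T → ∀ x : ℤ,
      ∫ ω, |(x : ℝ) - (S (min (τ ω) t) ω : ℝ)| ∂P ≤ evol μ t x := by
  have hW : IsSimpleSymmetricWalk P F S X :=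
    { zero := fun ω => by simp [hS]
      succ := fun t ω => by simp [hS, Finset.sum_range_succ]
      measurable := fun t => by
        rw [show S t = fun ω => ∑ i ∈ Finset.range t, X i ω from funext (hS t)]
        exact Finset.measurable_sum _ fun i hi =>
          (hadapted i).mono (F.mono (Finset.mem_range.mp hi)) le_rfl
      indep := hindepF
      sign := hdist }
  exact hW.stoppedPotential_le_evol hτ hτT hlaw

/-- Any (possibly randomized, via the `F₀`-measurable uniform variable ξ independent of the
walk) stopping time `τ ≤ T` embedding μ satisfies `U_{S_{τ∧t}}(x) ≤ U_t(x)` for `t ≤ T`. -/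
theorem stmt10 {Ω : Type*} {m0 : MeasurableSpace Ω} (P : Measure Ω) [IsProbabilityMeasure P]
    (F : Filtration ℕ m0)
    (X : ℕ → Ω → ℤ) (ξ : Ω → ℝ)
    (hmeas : ∀ i, Measurable (X i))
    (hadapted : ∀ i, Measurable[F (i + 1)] (X i))
    (hindep : iIndepFun X P)
    (hindepF : ∀ i, Indep (MeasurableSpace.comap (X i) inferInstance) (F i) P)
    (hdist : ∀ i, P (X i ⁻¹' {1}) = 1/2 ∧ P (X i ⁻¹' {-1}) = 1/2)
    (hξmeas : Measurable[F 0] ξ)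
    (hξunif : P.map ξ = MeasureTheory.volume.restrict (Set.Icc (0:ℝ) 1))
    (hξindep : IndepFun ξ (fun ω (i : ℕ) => X i ω) P)
    (S : ℕ → Ω → ℤ) (hS : ∀ t ω, S t ω = ∑ i ∈ Finset.range t, X i ω)
    (T : ℕ) (hT : 1 ≤ T)
    (μ : ℤ → ℝ) (hμ : IsCenteredPMF μ) (hsupp : ∀ z : ℤ, μ z ≠ 0 → |z| ≤ (T : ℤ))
    (τ : Ω → ℕ) (hτ : IsStoppingTime F (fun ω => (τ ω : WithTop ℕ))) (hτT : ∀ ω, τ ω ≤ T)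
    (hlaw : ∀ z : ℤ, (P {ω | S (τ ω) ω = z}).toReal = μ z) :
    ∀ t : ℕ, t ≤ T → ∀ x : ℤ,
      ∫ ω, |(x : ℝ) - (S (min (τ ω) t) ω : ℝ)| ∂P ≤ evol μ t x :=
  stmt10_general P F X hadapted hindepF hdist S hS T μ τ hτ hτT hlaw
end

section
/- Suppose w₊, w₋ : [0,1] → [0,1] are probability weighting functions with w₊(0)=w₋(0)=0, both differentiable on (0,1), u₊(1), u₋(1) > 0, and λ > 0. If lim_{p→0⁺} w₊'(p)/w₋'(p) > λ·u₋(1)/u₊(1), then there exists q ∈ (0, 1/2] such that u₊(1)·w₊(q) − λ·u₋(1)·w₋(q) > 0. -/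
/-!
Write `g p = u₊ w₊(p) - λ u₋ w₋(p)`, so that `g 0 = 0`. Near `0` the ratio `w₊'/w₋'` stays above
`λ u₋ / u₊ > 0`, and `w₋' ≥ 0` by monotonicity; hence `w₋' > 0` and `g' = u₊ w₊' - λ u₋ w₋' > 0`
on some interval `(0, q)`. By the mean value theorem `g q > g 0 = 0`.
-/

open Filter Set Topology

theorem MonotoneOn.deriv_nonneg {f : ℝ → ℝ} {s : Set ℝ} {x : ℝ} (hf : MonotoneOn f s)
    (hs : s ∈ 𝓝 x) : 0 ≤ deriv f x :=
  derivWithin_of_mem_nhds (f := f) hs ▸ hf.derivWithin_nonneg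

theorem mul_sub_mul_pos_of_div_lt_le_div {a b u k c : ℝ} (hu : 0 < u) (hk : 0 < k) (hb : 0 ≤ b)
    (hc : k / u < c) (hab : c ≤ a / b) : 0 < u * a - k * b := by
  have hku : 0 < k / u := div_pos hk hu
  have hb_pos : 0 < b := hb.lt_of_ne' fun h => by simp [h] at hab; linarith
  have hcb : c * b ≤ a := (le_div_iff₀ hb_pos).mp hab
  have hkc : k < c * u := (div_lt_iff₀ hu).mp hc
  nlinarith

theorem deriv_mul_sub_mul_pos_of_div_lt_le_div {f g : ℝ → ℝ} {x u k c : ℝ} (hu : 0 < u)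
    (hk : 0 < k) (hg : 0 ≤ deriv g x) (hc : k / u < c) (hfg : c ≤ deriv f x / deriv g x) :
    0 < deriv (fun y => u * f y - k * g y) x := by
  have hc0 : 0 < c := (div_pos hk hu).trans hc
  -- `deriv` is `0` where differentiability fails, and the ratio bound forces both derivatives `≠ 0`.
  have hf' : DifferentiableAt ℝ f x :=
    differentiableAt_of_deriv_ne_zero fun h => by simp [h] at hfg; linarith
  have hg' : DifferentiableAt ℝ g x :=
    differentiableAt_of_deriv_ne_zero fun h => by simp [h] at hfg; linarith
  rw [deriv_fun_sub (hf'.const_mul u) (hg'.const_mul k), deriv_const_mul _ hf',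
    deriv_const_mul _ hg']
  exact mul_sub_mul_pos_of_div_lt_le_div hu hk hg hc hfg

theorem exists_lt_of_eventually_deriv_pos {f : ℝ → ℝ} {a b : ℝ} (hab : a < b)
    (hf : ContinuousOn f (Icc a b)) (hderiv : ∀ᶠ x in 𝓝[>] a, 0 < deriv f x) :
    ∃ q ∈ Ioc a b, f a < f q := by
  obtain ⟨c, hac, hc⟩ := mem_nhdsGT_iff_exists_Ioo_subset.mp hderiv
  set q := min c b
  have haq : a < q := lt_min hac hab
  have hmono : StrictMonoOn f (Icc a q) := by
    refine strictMonoOn_of_deriv_pos (convex_Icc a q) (hf.mono (Icc_subset_Icc_right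
      (min_le_right c b))) fun x hx => hc ?_
    rw [interior_Icc] at hx
    exact ⟨hx.1, hx.2.trans_le (min_le_left c b)⟩
  exact ⟨q, ⟨haq, min_le_right c b⟩,
    hmono (left_mem_Icc.mpr haq.le) (right_mem_Icc.mpr haq.le) haq⟩

theorem stmt15_general (wp wm : ℝ → ℝ) (up1 um1 lam : ℝ)
    (hwp0 : wp 0 = 0) (hwm0 : wm 0 = 0)
    (hwm_mono : MonotoneOn wm (Icc 0 1))
    (hwp_cont : ContinuousOn wp (Icc 0 1)) (hwm_cont : ContinuousOn wm (Icc 0 1))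
    (hup : 0 < up1) (hum : 0 < um1) (hlam : 0 < lam)
    (hlim : ∃ c : ℝ, lam * um1 / up1 < c ∧
      ∀ᶠ p in nhdsWithin (0:ℝ) (Ioi 0), c ≤ deriv wp p / deriv wm p) :
    ∃ q ∈ Ioc (0:ℝ) (1/2), 0 < up1 * wp q - lam * um1 * wm q := by
  obtain ⟨c, hc, hratio⟩ := hlim
  have hderiv : ∀ᶠ p in 𝓝[>] 0, 0 < deriv (fun p => up1 * wp p - lam * um1 * wm p) p := by
    filter_upwards [hratio, Ioo_mem_nhdsGT one_pos] with p hp hp01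
    exact deriv_mul_sub_mul_pos_of_div_lt_le_div hup (by positivity)
      (hwm_mono.deriv_nonneg (Icc_mem_nhds hp01.1 hp01.2)) hc hp
  have hsub : Icc (0:ℝ) (1/2) ⊆ Icc 0 1 := Icc_subset_Icc_right (by norm_num)
  have hcont : ContinuousOn (fun p => up1 * wp p - lam * um1 * wm p) (Icc 0 (1/2)) :=
    ((hwp_cont.mono hsub).const_smul up1).sub ((hwm_cont.mono hsub).const_smul (lam * um1))
  obtain ⟨q, hq, hgq⟩ := exists_lt_of_eventually_deriv_pos (by norm_num) hcont hderiv
  exact ⟨q, hq, by simpa [hwp0, hwm0] using hgq⟩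

/-- If the ratio of marginal probability weightings at 0 exceeds the loss-aversion-adjusted
utility ratio, then some randomized one-shot strategy has a strictly positive CPT value. -/
theorem stmt15 (wp wm : ℝ → ℝ) (up1 um1 lam : ℝ)
    (hwp_map : ∀ p ∈ Icc (0:ℝ) 1, wp p ∈ Icc (0:ℝ) 1)
    (hwm_map : ∀ p ∈ Icc (0:ℝ) 1, wm p ∈ Icc (0:ℝ) 1)
    (hwp0 : wp 0 = 0) (hwm0 : wm 0 = 0)
    (hwp_mono : MonotoneOn wp (Icc 0 1)) (hwm_mono : MonotoneOn wm (Icc 0 1))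
    (hwp_cont : ContinuousOn wp (Icc 0 1)) (hwm_cont : ContinuousOn wm (Icc 0 1))
    (hwp_diff : ∀ p ∈ Ioo (0:ℝ) 1, DifferentiableAt ℝ wp p)
    (hwm_diff : ∀ p ∈ Ioo (0:ℝ) 1, DifferentiableAt ℝ wm p)
    (hup : 0 < up1) (hum : 0 < um1) (hlam : 0 < lam)
    (hlim : ∃ c : ℝ, lam * um1 / up1 < c ∧
      ∀ᶠ p in nhdsWithin (0:ℝ) (Ioi 0), c ≤ deriv wp p / deriv wm p) :
    ∃ q ∈ Ioc (0:ℝ) (1/2), 0 < up1 * wp q - lam * um1 * wm q :=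
  stmt15_general wp wm up1 um1 lam hwp0 hwm0 hwm_mono hwp_cont hwm_cont hup hum hlam hlim
end

section
/- Let u₋ : ℕ → ℝ be concave nondecreasing with u₋(0) = 0, and let w₋ : [0,1] → [0,1] be differentiable, nondecreasing, with w₋'(1−p) ≥ w₋'(p) for all p ∈ (0,1/2]. Then for every integer x ≥ 1, the function l(q) = (u₋(x+1) − u₋(x))·w₋(q) − (u₋(x) − u₋(x−1))·(1 − w₋(1−q)) is nonincreasing on [0,1/2]; hence its minimum over [0,1/2] is attained at q = 1/2 (the 'continue' decision). -/
open Set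

/-- Under the stated condition on the loss weighting function and concavity of the loss
utility, a naive gambler in loss one period before the deadline optimally continues. -/
theorem stmt18 (u : ℕ → ℝ) (w : ℝ → ℝ)
    (hu_mono : Monotone u) (hu0 : u 0 = 0)
    (hu_conc : ∀ x : ℕ, 1 ≤ x → u (x + 1) + u (x - 1) ≤ 2 * u x)
    (hw_map : ∀ p ∈ Icc (0:ℝ) 1, w p ∈ Icc (0:ℝ) 1)
    (hw_mono : MonotoneOn w (Icc 0 1))
    (hw_cont : ContinuousOn w (Icc 0 1))
    (hw_diff : ∀ p ∈ Ioo (0:ℝ) 1, DifferentiableAt ℝ w p)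
    (hderiv : ∀ p ∈ Ioc (0:ℝ) (1/2), deriv w p ≤ deriv w (1 - p))
    (x : ℕ) (hx : 1 ≤ x) :
    AntitoneOn (fun q => (u (x + 1) - u x) * w q - (u x - u (x - 1)) * (1 - w (1 - q)))
      (Icc (0:ℝ) (1/2)) ∧
    ∀ q ∈ Icc (0:ℝ) (1/2),
      (u (x + 1) - u x) * w (1/2) - (u x - u (x - 1)) * (1 - w (1 - 1/2))
        ≤ (u (x + 1) - u x) * w q - (u x - u (x - 1)) * (1 - w (1 - q)) := by
  set A := u (x + 1) - u x with hA
  set B := u x - u (x - 1) with hB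
  have hA0 : 0 ≤ A := sub_nonneg.2 (hu_mono (Nat.le_succ x))
  have hB0 : 0 ≤ B := sub_nonneg.2 (hu_mono (Nat.sub_le x 1))
  have hAB : A ≤ B := by
    have := hu_conc x hx
    simp only [hA, hB]; linarith
  -- g(q) = w q + w (1 - q) is antitone on [0, 1/2]
  have hsub : Icc (0:ℝ) (1/2) ⊆ Icc (0:ℝ) 1 := Icc_subset_Icc le_rfl (by norm_num)
  have hsub' : ∀ q ∈ Icc (0:ℝ) (1/2), (1 - q) ∈ Icc (0:ℝ) 1 := by
    intro q hq; constructor <;> [linarith [hq.2]; linarith [hq.1]]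
  have hg : AntitoneOn (fun q => w q + w (1 - q)) (Icc (0:ℝ) (1/2)) := by
    apply antitoneOn_of_deriv_nonpos (convex_Icc _ _)
    · exact (hw_cont.mono hsub).add
        ((hw_cont.comp ((continuousOn_const.sub continuousOn_id)) hsub'))
    · intro q hq
      rw [interior_Icc] at hq
      have hq1 : q ∈ Ioo (0:ℝ) 1 := ⟨hq.1, by linarith [hq.2]⟩
      have hq2 : (1 - q) ∈ Ioo (0:ℝ) 1 := ⟨by linarith [hq.2], by linarith [hq.1]⟩
      have h2 : DifferentiableAt ℝ (fun q : ℝ => w (1 - q)) q :=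
        ((hw_diff _ hq2).hasDerivAt.comp q ((hasDerivAt_id q).const_sub 1)).differentiableAt
      exact ((hw_diff q hq1).add h2).differentiableWithinAt
    · intro q hq
      rw [interior_Icc] at hq
      have hq1 : q ∈ Ioo (0:ℝ) 1 := ⟨hq.1, by linarith [hq.2]⟩
      have hq2 : (1 - q) ∈ Ioo (0:ℝ) 1 := ⟨by linarith [hq.2], by linarith [hq.1]⟩
      have h1 : HasDerivAt w (deriv w q) q := (hw_diff q hq1).hasDerivAt
      have h2 : HasDerivAt (fun q : ℝ => w (1 - q)) (deriv w (1 - q) * (-1)) q :=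
        (hw_diff _ hq2).hasDerivAt.comp q
          (((hasDerivAt_id q).const_sub 1))
      have h3 : HasDerivAt (fun q => w q + w (1 - q))
          (deriv w q + deriv w (1 - q) * (-1)) q := h1.add h2
      rw [h3.deriv]
      have := hderiv q ⟨hq.1, le_of_lt hq.2⟩
      linarith
  have hf : AntitoneOn (fun q => A * w q - B * (1 - w (1 - q))) (Icc (0:ℝ) (1/2)) := by
    intro q₁ hq₁ q₂ hq₂ h12
    simp only
    have hw1 : w q₁ ≤ w q₂ := hw_mono (hsub hq₁) (hsub hq₂) h12
    have hw2 : w (1 - q₂) ≤ w (1 - q₁) :=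
      hw_mono (hsub' q₂ hq₂) (hsub' q₁ hq₁) (by linarith)
    have hg' : w q₂ + w (1 - q₂) ≤ w q₁ + w (1 - q₁) := hg hq₁ hq₂ h12
    nlinarith [mul_le_mul_of_nonneg_left hw2 hB0]
  have hh : (1:ℝ)/2 ∈ Icc (0:ℝ) (1/2) := by constructor <;> norm_num
  exact ⟨hf, fun q hq => hf hq hh hq.2⟩
end
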